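/- Let F: ℝ² → ℝ³ and f, g: ℝ² → ℝ be differentiable at a point x̂ with a(x̂) := ‖∂₁F(x̂) × ∂₂F(x̂)‖₂ ≠ 0, and let K(x̂) = [⟨∂_kF(x̂), ∂_lF(x̂)⟩]_{k,l=1}^2 be the first fundamental tensor. Then the surface curl vectors v_f = ∂₁f·∂₂F − ∂₂f·∂₁F and v_g = ∂₁g·∂₂F − ∂₂g·∂₁F (all evaluated at x̂) satisfy ⟨v_f, v_g⟩ = a(x̂)² · (∇f(x̂))ᵀ K(x̂)^{-1} ∇g(x̂). Consequently, the inner product of the surface curls curl_Γ(f∘F⁻¹) = v_f/a and curl_Γ(g∘F⁻¹) = v_g/a equals (∇f)ᵀK^{-1}∇g, which is the identity underlying the regularized Galerkin representation of the hypersingular operator. -/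

import Mathlib

/-! The surface curl of `f` is the gradient `∇f` rotated by a quarter turn in the tangent plane,
`v_f = ∂₁f·∂₂F − ∂₂f·∂₁F`.  Expanding `⟨v_f, v_g⟩` bilinearly gives `(∇f)ᵀ adj(K) ∇g`, with `K`
the Gram matrix of `∂₁F, ∂₂F`; Lagrange's identity says `det K = ‖∂₁F × ∂₂F‖² = a²`, and
`adj K = det K · K⁻¹`. -/

open scoped RealInnerProductSpace

noncomputable def cross3 (a b : EuclideanSpace ℝ (Fin 3)) : EuclideanSpace ℝ (Fin 3) :=
  (WithLp.equiv 2 (Fin 3 → ℝ)).symm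
    ![a 1 * b 2 - a 2 * b 1, a 2 * b 0 - a 0 * b 2, a 0 * b 1 - a 1 * b 0]

open Matrix

theorem real_inner_rotate_eq_dotProduct_adjugate_gram {E : Type*}
    [NormedAddCommGroup E] [InnerProductSpace ℝ E] (u : Fin 2 → E) (α β : Fin 2 → ℝ) :
    ⟪α 0 • u 1 - α 1 • u 0, β 0 • u 1 - β 1 • u 0⟫ = α ⬝ᵥ (gram ℝ u).adjugate *ᵥ β := by
  simp only [adjugate_fin_two, gram_apply, dotProduct, mulVec, Fin.sum_univ_two, of_apply,
    cons_val', cons_val_zero, cons_val_one, empty_val', cons_val_fin_one, inner_sub_left,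
    inner_sub_right, real_inner_smul_left, real_inner_smul_right, real_inner_comm (u 0) (u 1)]
  ring

theorem norm_cross3_sq (u v : EuclideanSpace ℝ (Fin 3)) :
    ‖cross3 u v‖ ^ 2 = ‖u‖ ^ 2 * ‖v‖ ^ 2 - ⟪u, v⟫ ^ 2 := by
  simp only [cross3, EuclideanSpace.real_norm_sq_eq, PiLp.inner_apply, Fin.sum_univ_three,
    WithLp.equiv_symm_apply, cons_val_zero, cons_val_one, cons_val, RCLike.inner_apply,
    Real.ringHom_apply]
  ring

theorem det_gram_fin_two_eq_norm_cross3_sq (u : Fin 2 → EuclideanSpace ℝ (Fin 3)) :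
    (gram ℝ u).det = ‖cross3 (u 0) (u 1)‖ ^ 2 := by
  rw [det_fin_two, norm_cross3_sq, gram_apply, gram_apply, gram_apply, gram_apply,
    real_inner_self_eq_norm_sq, real_inner_self_eq_norm_sq, real_inner_comm (u 1)]
  ring

theorem det_mul_dotProduct_inv_mulVec_eq_adjugate {K n : Type*} [Field K] [Fintype n]
    [DecidableEq n] (A : Matrix n n K) (hA : A.det ≠ 0) (x y : n → K) :
    A.det * (x ⬝ᵥ A⁻¹ *ᵥ y) = x ⬝ᵥ A.adjugate *ᵥ y := by
  rw [inv_def, Ring.inverse_eq_inv, smul_mulVec, dotProduct_smul, smul_eq_mul,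
    mul_inv_cancel_left₀ hA]

theorem real_inner_rotate_eq_sq_norm_cross3_mul_dotProduct_inv_gram
    (u : Fin 2 → EuclideanSpace ℝ (Fin 3)) (hu : cross3 (u 0) (u 1) ≠ 0) (α β : Fin 2 → ℝ) :
    ⟪α 0 • u 1 - α 1 • u 0, β 0 • u 1 - β 1 • u 0⟫ =
      ‖cross3 (u 0) (u 1)‖ ^ 2 * (α ⬝ᵥ (gram ℝ u)⁻¹ *ᵥ β) := by
  have hdet : (gram ℝ u).det ≠ 0 := by
    rw [det_gram_fin_two_eq_norm_cross3_sq]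
    positivity
  rw [real_inner_rotate_eq_dotProduct_adjugate_gram,
    ← det_mul_dotProduct_inv_mulVec_eq_adjugate _ hdet, det_gram_fin_two_eq_norm_cross3_sq]

theorem surfaceCurl_inner_eq_grad_firstFundamentalTensor_inv_grad
    (F : EuclideanSpace ℝ (Fin 2) → EuclideanSpace ℝ (Fin 3))
    (f g : EuclideanSpace ℝ (Fin 2) → ℝ)
    (xhat : EuclideanSpace ℝ (Fin 2))
    (a : ℝ)
    (ha : a = ‖cross3 (fderiv ℝ F xhat (EuclideanSpace.single 0 1))
                      (fderiv ℝ F xhat (EuclideanSpace.single 1 1))‖)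
    (hane : a ≠ 0)
    (Kmat : Matrix (Fin 2) (Fin 2) ℝ)
    (hKmat : Kmat = Matrix.of fun k l : Fin 2 =>
      (⟪fderiv ℝ F xhat (EuclideanSpace.single k 1),
        fderiv ℝ F xhat (EuclideanSpace.single l 1)⟫ : ℝ))
    (vf vg : EuclideanSpace ℝ (Fin 3))
    (hvf : vf = fderiv ℝ f xhat (EuclideanSpace.single 0 1) •
                  fderiv ℝ F xhat (EuclideanSpace.single 1 1)
              - fderiv ℝ f xhat (EuclideanSpace.single 1 1) •
                  fderiv ℝ F xhat (EuclideanSpace.single 0 1))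
    (hvg : vg = fderiv ℝ g xhat (EuclideanSpace.single 0 1) •
                  fderiv ℝ F xhat (EuclideanSpace.single 1 1)
              - fderiv ℝ g xhat (EuclideanSpace.single 1 1) •
                  fderiv ℝ F xhat (EuclideanSpace.single 0 1))
    (gradf gradg : Fin 2 → ℝ)
    (hgradf : gradf = fun i => fderiv ℝ f xhat (EuclideanSpace.single i 1))
    (hgradg : gradg = fun i => fderiv ℝ g xhat (EuclideanSpace.single i 1)) :
    (⟪vf, vg⟫ : ℝ) = a ^ 2 * dotProduct gradf (Kmat⁻¹.mulVec gradg) ∧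
    (⟪a⁻¹ • vf, a⁻¹ • vg⟫ : ℝ) = dotProduct gradf (Kmat⁻¹.mulVec gradg) := by
  have hcurl : (⟪vf, vg⟫ : ℝ) = a ^ 2 * dotProduct gradf (Kmat⁻¹.mulVec gradg) := by
    subst ha hKmat hvf hvg hgradf hgradg
    exact real_inner_rotate_eq_sq_norm_cross3_mul_dotProduct_inv_gram
      (fun i => fderiv ℝ F xhat (EuclideanSpace.single i 1)) (norm_ne_zero_iff.mp hane)
      (fun i => fderiv ℝ f xhat (EuclideanSpace.single i 1))
      (fun i => fderiv ℝ g xhat (EuclideanSpace.single i 1))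
  refine ⟨hcurl, ?_⟩
  rw [real_inner_smul_left, real_inner_smul_right, hcurl, ← mul_assoc, ← mul_assoc,
    ← sq, ← mul_pow, inv_mul_cancel₀ hane, one_pow, one_mul]
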